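/- In the automaton A constructed from B by adding states q_f, q_n and letter $ (with δ(q,$)(q_f)=1 for q ∈ F_B, δ(q,$)(q_n)=1 for q ∈ Q_B \ F_B, and δ(q_f,σ)(q_n)=δ(q_n,σ)(q_n)=1 for all σ), the acceptance probability with accepting set {q_f} satisfies: P_A(w) = P_B(v) if w = v$ for some v ∈ Σ_B*, and P_A(w) = 0 otherwise. Consequently val(A) = val(B), and in particular val(A) = 1 iff val(B) = 1. -/

import Mathlib

open Filter Finset

/-- A probability distribution on a finite type. -/
def IsDist {Q : Type*} [Fintype Q] (d : Q → ℝ) : Prop :=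
  (∀ q, 0 ≤ d q) ∧ ∑ q, d q = 1

/-- The norm of a distribution: its maximal value. -/
noncomputable def dnorm {Q : Type*} [Fintype Q] [Nonempty Q] (d : Q → ℝ) : ℝ :=
  Finset.univ.sup' Finset.univ_nonempty d

/-- A probabilistic automaton over states `Q` and alphabet `A`. -/
structure PA (Q : Type*) (A : Type*) [Fintype Q] where
  init : Q → ℝ
  init_dist : IsDist init
  trans : Q → A → Q → ℝ
  trans_dist : ∀ q σ, IsDist (trans q σ)

variable {Q A : Type*} [Fintype Q]

/-- One transition step applied to a distribution. -/
def PAstep (M : PA Q A) (d : Q → ℝ) (σ : A) : Q → ℝ :=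
  fun q => ∑ q', d q' * M.trans q' σ q

/-- Computation of a PA on a finite word, starting from distribution `μ`. -/
def PArun (M : PA Q A) (μ : Q → ℝ) (w : List A) : Q → ℝ :=
  w.foldl (PAstep M) μ

/-- Outcome of a PA on an infinite word, started from `μ`. -/
def PAoutcomeFrom (M : PA Q A) (μ : Q → ℝ) (w : ℕ → A) : ℕ → Q → ℝ
  | 0 => μ
  | n + 1 => PAstep M (PAoutcomeFrom M μ w n) (w n)

/-- Outcome of a PA on an infinite word from the initial distribution. -/
def PAoutcome (M : PA Q A) (w : ℕ → A) : ℕ → Q → ℝ :=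
  PAoutcomeFrom M M.init w

/-! On letters of `Σ_B` the automaton `A` acts on `Q_B` exactly as `B` does and no mass leaves
`Q_B`. Reading `$` sends the accepting mass to `q_f`, the rest to `q_n`, and empties `Q_B`; from
then on all mass is trapped in `q_n`. Hence `q_f` carries mass only on words ending with their
first `$`, and on `v$` it carries exactly `P_B(v)`. -/

theorem IsDist.sum_le_one {d : Q → ℝ} (hd : IsDist d) (s : Finset Q) : ∑ q ∈ s, d q ≤ 1 :=
  hd.2 ▸ sum_le_sum_of_subset_of_nonneg (subset_univ s) fun q _ _ => hd.1 q

theorem IsDist.eq_zero_of_sum_eq_one {d : Q → ℝ} (hd : IsDist d) {s : Finset Q}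
    (hs : ∑ q ∈ s, d q = 1) {q : Q} (hq : q ∉ s) : d q = 0 := by
  classical
  have hrest : ∑ q ∈ univ \ s, d q = 0 := by
    linarith [sum_sdiff (f := d) (subset_univ s), hd.2]
  exact (sum_eq_zero_iff_of_nonneg fun q _ => hd.1 q).1 hrest q (by simp [hq])

theorem IsDist.eq_zero_of_eq_one {d : Q → ℝ} (hd : IsDist d) {q : Q} (h : d q = 1) {q' : Q}
    (hq' : q' ≠ q) : d q' = 0 :=
  hd.eq_zero_of_sum_eq_one (s := {q}) (by rwa [sum_singleton]) (by simpa using hq')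

theorem isDist_PAstep (M : PA Q A) {d : Q → ℝ} (hd : IsDist d) (σ : A) :
    IsDist (PAstep M d σ) := by
  refine ⟨fun q => sum_nonneg fun q' _ => mul_nonneg (hd.1 q') ((M.trans_dist q' σ).1 q), ?_⟩
  unfold PAstep
  rw [sum_comm]
  simp_rw [← mul_sum, (M.trans_dist _ σ).2, mul_one]
  exact hd.2

theorem isDist_PArun (M : PA Q A) {μ : Q → ℝ} (hμ : IsDist μ) (w : List A) :
    IsDist (PArun M μ w) := by
  induction w generalizing μ with
  | nil => exact hμ
  | cons σ w ih => exact ih (isDist_PAstep M hμ σ)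

theorem PArun_append (M : PA Q A) (μ : Q → ℝ) (u w : List A) :
    PArun M μ (u ++ w) = PArun M (PArun M μ u) w :=
  List.foldl_append

theorem PArun_singleton (M : PA Q A) (μ : Q → ℝ) (σ : A) :
    PArun M μ [σ] = PAstep M μ σ :=
  rfl

theorem PAstep_eq_zero {M : PA Q A} {d : Q → ℝ} {σ : A} {q : Q}
    (h : ∀ q', d q' = 0 ∨ M.trans q' σ q = 0) : PAstep M d σ q = 0 :=
  sum_eq_zero fun q' _ => (h q').elim (fun h => by rw [h, zero_mul]) fun h => by rw [h, mul_zero]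

theorem List.exists_eq_map_inl {S : Type*} {u : List (S ⊕ Unit)} (h : Sum.inr () ∉ u) :
    ∃ v : List S, u = v.map Sum.inl := by
  induction u with
  | nil => exact ⟨[], rfl⟩
  | cons x u ih =>
    obtain ⟨hx, hu⟩ := not_or.1 (List.mem_cons.not.1 h)
    obtain ⟨v, rfl⟩ := ih hu
    rcases x with s | _
    · exact ⟨s :: v, rfl⟩
    · exact absurd rfl hx

theorem ciSup_eq_of_eq_comp_of_eq_zero {α β : Type*} [Nonempty α] {f : α → ℝ} {g : β → ℝ}
    (e : α → β) (hf : BddAbove (Set.range f)) (hf0 : ∀ a, 0 ≤ f a)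
    (hge : ∀ a, g (e a) = f a) (hg : ∀ b, (¬ ∃ a, b = e a) → g b = 0) :
    ⨆ b, g b = ⨆ a, f a := by
  obtain ⟨a₀⟩ := ‹Nonempty α›
  have hfg : ∀ b, g b ≤ ⨆ a, f a := fun b => by
    by_cases hb : ∃ a, b = e a
    · obtain ⟨a, rfl⟩ := hb
      exact hge a ▸ le_ciSup hf a
    · exact hg b hb ▸ (hf0 a₀).trans (le_ciSup hf a₀)
  have : Nonempty β := ⟨e a₀⟩
  refine le_antisymm (ciSup_le hfg) (ciSup_le fun a => ?_)
  exact hge a ▸ le_ciSup ⟨_, Set.forall_mem_range.2 hfg⟩ (e a)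

/-- `M` is the automaton `A` of the construction: `q_f = inr true`, `q_n = inr false`,
`$ = inr ()`. -/
structure IsDollarExtension {QB SB : Type*} [Fintype QB] (B : PA QB SB) (F : Finset QB)
    (M : PA (QB ⊕ Bool) (SB ⊕ Unit)) : Prop where
  init_inl : ∀ q, M.init (Sum.inl q) = B.init q
  init_inr : ∀ b, M.init (Sum.inr b) = 0
  trans_inl : ∀ q σ q', M.trans (Sum.inl q) (Sum.inl σ) (Sum.inl q') = B.trans q σ q'
  dollar_mem : ∀ q ∈ F, M.trans (Sum.inl q) (Sum.inr ()) (Sum.inr true) = 1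
  dollar_not_mem : ∀ q ∉ F, M.trans (Sum.inl q) (Sum.inr ()) (Sum.inr false) = 1
  qf : ∀ σ, M.trans (Sum.inr true) σ (Sum.inr false) = 1
  qn : ∀ σ, M.trans (Sum.inr false) σ (Sum.inr false) = 1

namespace IsDollarExtension

variable {QB SB : Type*} [Fintype QB] {B : PA QB SB} {F : Finset QB}
  {M : PA (QB ⊕ Bool) (SB ⊕ Unit)}

theorem init_eq (hM : IsDollarExtension B F M) : M.init = Sum.elim B.init 0 :=
  funext fun q => q.casesOn hM.init_inl hM.init_inr

theorem trans_inl_inr (hM : IsDollarExtension B F M) (q : QB) (σ : SB) (b : Bool) :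
    M.trans (Sum.inl q) (Sum.inl σ) (Sum.inr b) = 0 := by
  refine (M.trans_dist _ _).eq_zero_of_sum_eq_one (s := univ.map .inl) ?_ (by simp)
  simpa only [sum_map, Function.Embedding.inl_apply, hM.trans_inl] using (B.trans_dist q σ).2

theorem trans_inr (hM : IsDollarExtension B F M) (b : Bool) (σ : SB ⊕ Unit) {q' : QB ⊕ Bool}
    (hq' : q' ≠ Sum.inr false) : M.trans (Sum.inr b) σ q' = 0 := by
  cases b
  · exact (M.trans_dist _ _).eq_zero_of_eq_one (hM.qn σ) hq'
  · exact (M.trans_dist _ _).eq_zero_of_eq_one (hM.qf σ) hq'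

theorem trans_dollar_inl (hM : IsDollarExtension B F M) (q q' : QB) :
    M.trans (Sum.inl q) (Sum.inr ()) (Sum.inl q') = 0 := by
  by_cases hq : q ∈ F
  · exact (M.trans_dist _ _).eq_zero_of_eq_one (hM.dollar_mem q hq) Sum.inl_ne_inr
  · exact (M.trans_dist _ _).eq_zero_of_eq_one (hM.dollar_not_mem q hq) Sum.inl_ne_inr

theorem trans_dollar_qf (hM : IsDollarExtension B F M) (q : QB) [Decidable (q ∈ F)] :
    M.trans (Sum.inl q) (Sum.inr ()) (Sum.inr true) = if q ∈ F then 1 else 0 := by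
  split_ifs with hq
  · exact hM.dollar_mem q hq
  · exact (M.trans_dist _ _).eq_zero_of_eq_one (hM.dollar_not_mem q hq) (by simp)

theorem step_elim_inl (hM : IsDollarExtension B F M) (μ : QB → ℝ) (σ : SB) :
    PAstep M (Sum.elim μ 0) (Sum.inl σ) = Sum.elim (PAstep B μ σ) 0 := by
  ext (q | b) <;>
    simp [PAstep, Fintype.sum_sum_type, hM.trans_inl, hM.trans_inl_inr]

theorem run_elim_map_inl (hM : IsDollarExtension B F M) (μ : QB → ℝ) (v : List SB) :
    PArun M (Sum.elim μ 0) (v.map Sum.inl) = Sum.elim (PArun B μ v) 0 := by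
  induction v generalizing μ with
  | nil => rfl
  | cons σ v ih => exact (congrArg (List.foldl _ · _) (hM.step_elim_inl μ σ)).trans (ih _)

theorem step_dollar_qf (hM : IsDollarExtension B F M) (d : QB ⊕ Bool → ℝ) :
    PAstep M d (Sum.inr ()) (Sum.inr true) = ∑ q ∈ F, d (Sum.inl q) := by
  classical
  simp [PAstep, Fintype.sum_sum_type, hM.trans_dollar_qf, hM.trans_inr]

theorem step_inl_qf (hM : IsDollarExtension B F M) (d : QB ⊕ Bool → ℝ) (σ : SB) :
    PAstep M d (Sum.inl σ) (Sum.inr true) = 0 :=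
  PAstep_eq_zero fun
    | .inl q => .inr (hM.trans_inl_inr q σ true)
    | .inr b => .inr (hM.trans_inr b _ (by simp))

theorem step_dollar_inl (hM : IsDollarExtension B F M) (d : QB ⊕ Bool → ℝ) (q : QB) :
    PAstep M d (Sum.inr ()) (Sum.inl q) = 0 :=
  PAstep_eq_zero fun
    | .inl q' => .inr (hM.trans_dollar_inl q' q)
    | .inr b => .inr (hM.trans_inr b _ Sum.inl_ne_inr)

theorem step_eq_zero_of_inl_eq_zero (hM : IsDollarExtension B F M) {d : QB ⊕ Bool → ℝ}
    (hd : ∀ q, d (Sum.inl q) = 0) (σ : SB ⊕ Unit) {q : QB ⊕ Bool} (hq : q ≠ Sum.inr false) :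
    PAstep M d σ q = 0 :=
  PAstep_eq_zero fun
    | .inl q' => .inl (hd q')
    | .inr b => .inr (hM.trans_inr b σ hq)

theorem run_inl_eq_zero (hM : IsDollarExtension B F M) {d : QB ⊕ Bool → ℝ}
    (hd : ∀ q, d (Sum.inl q) = 0) (w : List (SB ⊕ Unit)) (q : QB) :
    PArun M d w (Sum.inl q) = 0 := by
  induction w generalizing d with
  | nil => exact hd q
  | cons σ w ih => exact ih fun q => hM.step_eq_zero_of_inl_eq_zero hd σ Sum.inl_ne_inr

theorem run_inl_eq_zero_of_dollar_mem (hM : IsDollarExtension B F M) (d : QB ⊕ Bool → ℝ)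
    {w : List (SB ⊕ Unit)} (hw : Sum.inr () ∈ w) (q : QB) :
    PArun M d w (Sum.inl q) = 0 := by
  obtain ⟨s, t, rfl⟩ := List.append_of_mem hw
  rw [PArun_append]
  exact hM.run_inl_eq_zero (hM.step_dollar_inl _) t q

theorem run_dollar_qf (hM : IsDollarExtension B F M) (v : List SB) :
    PArun M M.init (v.map Sum.inl ++ [Sum.inr ()]) (Sum.inr true) =
      ∑ q ∈ F, PArun B B.init v q := by
  rw [PArun_append, PArun_singleton, hM.step_dollar_qf, hM.init_eq, hM.run_elim_map_inl]
  rfl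

theorem run_qf_eq_zero (hM : IsDollarExtension B F M) {w : List (SB ⊕ Unit)}
    (hw : ¬ ∃ v : List SB, w = v.map Sum.inl ++ [Sum.inr ()]) :
    PArun M M.init w (Sum.inr true) = 0 := by
  rcases List.eq_nil_or_concat w with rfl | ⟨u, x, rfl⟩
  · exact hM.init_inr true
  rw [List.concat_eq_append] at hw ⊢
  rw [PArun_append, PArun_singleton]
  rcases x with σ | _
  · exact hM.step_inl_qf _ σ
  · by_cases hu : Sum.inr () ∈ u
    · exact hM.step_eq_zero_of_inl_eq_zero (hM.run_inl_eq_zero_of_dollar_mem _ hu) _ (by simp)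
    · obtain ⟨v, rfl⟩ := List.exists_eq_map_inl hu
      exact absurd ⟨v, rfl⟩ hw

end IsDollarExtension

theorem stmt_12_general {QB SB : Type*} [Fintype QB]
    (B : PA QB SB) (F : Finset QB)
    (M : PA (QB ⊕ Bool) (SB ⊕ Unit))
    (hMinit : ∀ q, M.init (Sum.inl q) = B.init q)
    (hMinit' : ∀ b, M.init (Sum.inr b) = 0)
    (hMtrans : ∀ q σ q', M.trans (Sum.inl q) (Sum.inl σ) (Sum.inl q') = B.trans q σ q')
    (hdollarF : ∀ q ∈ F, M.trans (Sum.inl q) (Sum.inr ()) (Sum.inr true) = 1)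
    (hdollarN : ∀ q ∉ F, M.trans (Sum.inl q) (Sum.inr ()) (Sum.inr false) = 1)
    (hqf : ∀ σ, M.trans (Sum.inr true) σ (Sum.inr false) = 1)
    (hqn : ∀ σ, M.trans (Sum.inr false) σ (Sum.inr false) = 1) :
    (∀ v : List SB,
      PArun M M.init (v.map Sum.inl ++ [Sum.inr ()]) (Sum.inr true) =
        ∑ q ∈ F, PArun B B.init v q) ∧
    (∀ w : List (SB ⊕ Unit), (¬ ∃ v : List SB, w = v.map Sum.inl ++ [Sum.inr ()]) →
      PArun M M.init w (Sum.inr true) = 0) ∧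
    (⨆ w : List (SB ⊕ Unit), PArun M M.init w (Sum.inr true)) =
      (⨆ v : List SB, ∑ q ∈ F, PArun B B.init v q) ∧
    ((⨆ w : List (SB ⊕ Unit), PArun M M.init w (Sum.inr true)) = 1 ↔
      (⨆ v : List SB, ∑ q ∈ F, PArun B B.init v q) = 1) := by
  have hM : IsDollarExtension B F M := ⟨hMinit, hMinit', hMtrans, hdollarF, hdollarN, hqf, hqn⟩
  have hPB := fun v => isDist_PArun B B.init_dist v
  have hval := ciSup_eq_of_eq_comp_of_eq_zero (fun v => v.map Sum.inl ++ [Sum.inr ()])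
    ⟨1, Set.forall_mem_range.2 fun v => (hPB v).sum_le_one F⟩
    (fun v => sum_nonneg fun q _ => (hPB v).1 q) hM.run_dollar_qf fun _ => hM.run_qf_eq_zero
  exact ⟨hM.run_dollar_qf, fun _ => hM.run_qf_eq_zero, hval, by rw [hval]⟩

/-- The automaton `A` is built from `B` by adding fresh states `q_f = inr true`
    and `q_n = inr false` and a fresh letter `$ = Sum.inr ()`:
    `δ(q,$)(q_f) = 1` for accepting `q`, `δ(q,$)(q_n) = 1` otherwise, and
    `δ(q_f,σ)(q_n) = δ(q_n,σ)(q_n) = 1` for every letter `σ`.  Then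
    `P_A(v$) = P_B(v)` for `v ∈ Σ_B*`, `P_A(w) = 0` for all other words,
    `val(A) = val(B)`, and `val(A) = 1 ↔ val(B) = 1`. -/
theorem stmt_12 {QB SB : Type*} [Fintype QB]
    (B : PA QB SB) (F : Finset QB) (q0 : QB)
    (hq0 : B.init q0 = 1)
    (M : PA (QB ⊕ Bool) (SB ⊕ Unit))
    (hMinit : ∀ q, M.init (Sum.inl q) = B.init q)
    (hMinit' : ∀ b, M.init (Sum.inr b) = 0)
    (hMtrans : ∀ q σ q', M.trans (Sum.inl q) (Sum.inl σ) (Sum.inl q') = B.trans q σ q')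
    (hdollarF : ∀ q ∈ F, M.trans (Sum.inl q) (Sum.inr ()) (Sum.inr true) = 1)
    (hdollarN : ∀ q ∉ F, M.trans (Sum.inl q) (Sum.inr ()) (Sum.inr false) = 1)
    (hqf : ∀ σ, M.trans (Sum.inr true) σ (Sum.inr false) = 1)
    (hqn : ∀ σ, M.trans (Sum.inr false) σ (Sum.inr false) = 1) :
    (∀ v : List SB,
      PArun M M.init (v.map Sum.inl ++ [Sum.inr ()]) (Sum.inr true) =
        ∑ q ∈ F, PArun B B.init v q) ∧
    (∀ w : List (SB ⊕ Unit), (¬ ∃ v : List SB, w = v.map Sum.inl ++ [Sum.inr ()]) →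
      PArun M M.init w (Sum.inr true) = 0) ∧
    (⨆ w : List (SB ⊕ Unit), PArun M M.init w (Sum.inr true)) =
      (⨆ v : List SB, ∑ q ∈ F, PArun B B.init v q) ∧
    ((⨆ w : List (SB ⊕ Unit), PArun M M.init w (Sum.inr true)) = 1 ↔
      (⨆ v : List SB, ∑ q ∈ F, PArun B B.init v q) = 1) :=
  stmt_12_general B F M hMinit hMinit' hMtrans hdollarF hdollarN hqf hqn
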